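/- arXiv:2504.01773 — 6 statements merged into one kernel-verified Lean document; each statement's English description precedes it below -/
import Mathlib

section
/- Downsizing Lemma for Submodular Reward: Let (A, f, c) be a multi-agent contract instance with monotone submodular f, and let ψ : 2^A → [0,1] be a subadditive set function. Then for every integer M ≥ 3 and every subset S ⊆ A such that f_S(i) > 0 for each i ∈ S with c_i > 0, there exists a subset T ⊆ S such that ( p(T) ≤ (2/M)·p(S) or |T| = 1 ) and ψ(T) ≥ (1/(M−1))·ψ(S). -/
open scoped BigOperators ENNReal
open Finset

/-- Marginal contribution of agent `i` to set `S`: `f_S(i) = f(S) - f(S \ {i})`. -/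
noncomputable def marginal {α : Type*} [DecidableEq α] (f : Finset α → ℝ) (S : Finset α)
    (i : α) : ℝ :=
  f S - f (S.erase i)

/-- Payment needed to incentivize `S`, valued in `[0,∞]`, with the conventions
`0/0 = 0` and `x/0 = ∞` for `x > 0` (these hold for ENNReal division). -/
noncomputable def payment {α : Type*} [DecidableEq α] (f : Finset α → ℝ) (c : α → ℝ)
    (S : Finset α) : ℝ≥0∞ :=
  ∑ i ∈ S, ENNReal.ofReal (c i) / ENNReal.ofReal (marginal f S i)

/-- The principal's profit from incentivizing `S`: `g(S) = (1 - p(S)) · f(S)`. -/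
noncomputable def profit {α : Type*} [DecidableEq α] (f : Finset α → ℝ) (c : α → ℝ)
    (S : Finset α) : ℝ :=
  (1 - (payment f c S).toReal) * f S

/-- `f` is monotone. -/
def IsMonotoneFn {α : Type*} (f : Finset α → ℝ) : Prop :=
  ∀ ⦃S T : Finset α⦄, S ⊆ T → f S ≤ f T

/-- `f` is subadditive. -/
def IsSubadditive {α : Type*} [DecidableEq α] (f : Finset α → ℝ) : Prop :=
  ∀ S T : Finset α, f (S ∪ T) ≤ f S + f T

/-- `f` is submodular (decreasing marginal values). -/
def IsSubmodular {α : Type*} [DecidableEq α] (f : Finset α → ℝ) : Prop :=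
  ∀ ⦃S T : Finset α⦄, S ⊆ T → ∀ i ∉ T, f (insert i T) - f T ≤ f (insert i S) - f S

/-- `f` is additive. -/
def IsAdditive {α : Type*} [DecidableEq α] (f : Finset α → ℝ) : Prop :=
  ∀ S : Finset α, f S = ∑ i ∈ S, f {i}

/-- `f` is XOS: a finite max of nonnegative additive functions. -/
def IsXOS {α : Type*} (f : Finset α → ℝ) : Prop :=
  ∃ (k : ℕ) (a : Fin (k + 1) → α → ℝ),
    (∀ j i, 0 ≤ a j i) ∧
    ∀ S : Finset α, f S = Finset.univ.sup' Finset.univ_nonempty (fun j => ∑ i ∈ S, a j i)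

/-- Agent `i` is light: it can be incentivized with payment at most `1/2`. -/
def isLight {α : Type*} [DecidableEq α] (f : Finset α → ℝ) (c : α → ℝ) (i : α) : Prop :=
  payment f c {i} ≤ ENNReal.ofReal (1 / 2)

/-- `S` is budget-feasible for budget `B`. -/
def feasible {α : Type*} [DecidableEq α] (f : Finset α → ℝ) (c : α → ℝ) (B : ℝ)
    (S : Finset α) : Prop :=
  payment f c S ≤ ENNReal.ofReal B

/-- `S` is a budget-feasible set of light agents. -/
def feasibleLight {α : Type*} [DecidableEq α] (f : Finset α → ℝ) (c : α → ℝ) (B : ℝ)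
    (S : Finset α) : Prop :=
  (∀ i ∈ S, isLight f c i) ∧ payment f c S ≤ ENNReal.ofReal B

/-- The maximum (supremum) value of objective `φ` over sets satisfying `P`. -/
noncomputable def maxVal {α : Type*} (φ : Finset α → ℝ) (P : Finset α → Prop) : ℝ :=
  sSup (φ '' {S | P S})

/-- `φ` is a BEST objective for the instance `(f, c)`: it is nonnegative, sandwiched between
profit and reward, and satisfies `φ(S) ≤ f(S \ {i}) + φ({i})` for `i ∈ S`. -/
def IsBEST {α : Type*} [DecidableEq α] (f : Finset α → ℝ) (c : α → ℝ)
    (φ : Finset α → ℝ) : Prop :=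
  (∀ S, 0 ≤ φ S) ∧
  (∀ S, φ S ≤ f S) ∧
  (∀ S, payment f c S ≤ 1 → (1 - (payment f c S).toReal) * f S ≤ φ S) ∧
  (∀ S, ∀ i ∈ S, φ S ≤ f (S.erase i) + φ {i})

/-- `φ` is a BEST objective for the instance `(f, c)` restricted to sets satisfying `P`. -/
def IsBESTOn {α : Type*} [DecidableEq α] (f : Finset α → ℝ) (c : α → ℝ)
    (P : Finset α → Prop) (φ : Finset α → ℝ) : Prop :=
  (∀ S, P S → 0 ≤ φ S) ∧
  (∀ S, P S → φ S ≤ f S) ∧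
  (∀ S, P S → payment f c S ≤ 1 → (1 - (payment f c S).toReal) * f S ≤ φ S) ∧
  (∀ S, P S → ∀ i ∈ S, φ S ≤ f (S.erase i) + φ {i})

lemma subadd_sup_le {α : Type*} [DecidableEq α] {ψ : Finset α → ℝ}
    (hψ : IsSubadditive ψ) (Ps : Finset (Finset α)) (hPs : Ps.Nonempty) :
    ψ (Ps.sup id) ≤ ∑ P ∈ Ps, ψ P := by
  induction hPs using Finset.Nonempty.cons_induction with
  | singleton P => simp
  | cons P Ps hP hPs ih =>
      rw [Finset.sup_cons, Finset.sum_cons]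
      calc ψ (P ⊔ Ps.sup id) ≤ ψ P + ψ (Ps.sup id) := hψ P _
        _ ≤ ψ P + ∑ Q ∈ Ps, ψ Q := by linarith

lemma refine_partition {α : Type*} [DecidableEq α] (v : Finset α → ℝ)
    (hv0 : ∀ P, 0 ≤ v P)
    (hv : ∀ P Q : Finset α, v (P ∪ Q) ≤ v P + v Q) (C : ℝ) :
    ∀ n (Ps : Finset (Finset α)), Ps.card ≤ n →
      (∀ P ∈ Ps, P.card = 1 ∨ v P ≤ C) →
      ∃ Qs : Finset (Finset α),
        Qs.sup id = Ps.sup id ∧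
        (∑ P ∈ Qs, v P) ≤ ∑ P ∈ Ps, v P ∧
        (∀ P ∈ Qs, P.card = 1 ∨ v P ≤ C) ∧
        (∀ P ∈ Qs, ∀ Q ∈ Qs, P ≠ Q → C < v P + v Q) := by
  intro n
  induction n with
  | zero =>
      intro Ps hcard hcond
      refine ⟨Ps, rfl, le_refl _, hcond, ?_⟩
      intro P hP
      rw [Nat.le_zero, Finset.card_eq_zero] at hcard
      simp [hcard] at hP
  | succ n ih =>
      intro Ps hcard hcond
      by_cases hpair : ∃ P ∈ Ps, ∃ Q ∈ Ps, P ≠ Q ∧ v P + v Q ≤ C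
      · obtain ⟨P, hP, Q, hQ, hne, hle⟩ := hpair
        set R := (Ps.erase P).erase Q with hR
        have hQR : Q ∉ R := Finset.notMem_erase _ _
        have hQmem : Q ∈ Ps.erase P := Finset.mem_erase.2 ⟨hne.symm, hQ⟩
        have hins1 : insert Q R = Ps.erase P := Finset.insert_erase hQmem
        have hPR : P ∉ insert Q R := by rw [hins1]; exact Finset.notMem_erase _ _
        have hins2 : insert P (insert Q R) = Ps := by rw [hins1]; exact Finset.insert_erase hP
        have hcard2 : (insert (P ∪ Q) R).card ≤ n := by
          have h2 : (insert P (insert Q R)).card = R.card + 2 := by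
            rw [Finset.card_insert_of_notMem hPR, Finset.card_insert_of_notMem hQR]
          rw [hins2] at h2
          have h3 := Finset.card_insert_le (P ∪ Q) R
          omega
        have hcond2 : ∀ X ∈ insert (P ∪ Q) R, X.card = 1 ∨ v X ≤ C := by
          intro X hX
          rcases Finset.mem_insert.1 hX with rfl | hX
          · exact Or.inr ((hv P Q).trans hle)
          · exact hcond X (by rw [← hins2]; exact Finset.mem_insert_of_mem (Finset.mem_insert_of_mem hX))
        obtain ⟨Qs, hsup, hsum, hc', hpair'⟩ := ih (insert (P ∪ Q) R) hcard2 hcond2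
        refine ⟨Qs, ?_, ?_, hc', hpair'⟩
        · rw [hsup, ← hins2, Finset.sup_insert, Finset.sup_insert, Finset.sup_insert]
          simp only [id]
          exact Finset.union_assoc P Q (R.sup id)
        · refine hsum.trans ?_
          rw [← hins2, Finset.sum_insert hPR, Finset.sum_insert hQR]
          have h4 : ∑ X ∈ insert (P ∪ Q) R, v X ≤ v (P ∪ Q) + ∑ X ∈ R, v X := by
            by_cases hmem : (P ∪ Q) ∈ R
            · rw [Finset.insert_eq_self.2 hmem]
              have := hv0 (P ∪ Q); linarith
            · rw [Finset.sum_insert hmem]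
          have := hv P Q; linarith
      · push_neg at hpair
        exact ⟨Ps, rfl, le_refl _, hcond, hpair⟩


/-- **Downsizing Lemma for Submodular Reward.** -/
theorem downsizing_submodular {α : Type*} [DecidableEq α] [Fintype α]
    (f : Finset α → ℝ) (c : α → ℝ) (ψ : Finset α → ℝ)
    (hf01 : ∀ S, f S ∈ Set.Icc (0 : ℝ) 1)
    (hmono : IsMonotoneFn f) (hsubmod : IsSubmodular f)
    (hc : ∀ i, 0 ≤ c i)
    (hψ01 : ∀ S, ψ S ∈ Set.Icc (0 : ℝ) 1) (hψ : IsSubadditive ψ)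
    (M : ℕ) (hM : 3 ≤ M) (S : Finset α)
    (hpos : ∀ i ∈ S, 0 < c i → 0 < marginal f S i) :
    ∃ T ⊆ S,
      (payment f c T ≤ (2 / (M : ℝ≥0∞)) * payment f c S ∨ T.card = 1) ∧
      (1 / ((M : ℝ) - 1)) * ψ S ≤ ψ T := by
  have hMR : (3:ℝ) ≤ (M:ℝ) := by exact_mod_cast hM
  have hM1pos : (0:ℝ) < (M:ℝ) - 1 := by linarith
  have hMpos : (0:ℝ) < (M:ℝ) := by linarith
  -- trivial case ψ S ≤ 0
  by_cases hψS : ψ S ≤ 0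
  · refine ⟨∅, Finset.empty_subset S, Or.inl ?_, ?_⟩
    · simp [payment]
    · have h0 : (0:ℝ) ≤ ψ (∅ : Finset α) := (hψ01 ∅).1
      have h1 : (1 / ((M:ℝ) - 1)) * ψ S ≤ 0 :=
        mul_nonpos_of_nonneg_of_nonpos (by positivity) hψS
      linarith
  push_neg at hψS
  -- weights
  set w : α → ℝ := fun i => c i / marginal f S i with hw_def
  have hmargS : ∀ i, 0 ≤ marginal f S i := by
    intro i
    have := hmono (Finset.erase_subset i S)
    simpa [marginal] using this
  have hw0 : ∀ i, 0 ≤ w i := fun i => div_nonneg (hc i) (hmargS i)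
  set W : ℝ := ∑ i ∈ S, w i with hW_def
  have hW0 : 0 ≤ W := Finset.sum_nonneg fun i _ => hw0 i
  have hterm : ∀ i ∈ S, ENNReal.ofReal (c i) / ENNReal.ofReal (marginal f S i)
      = ENNReal.ofReal (w i) := by
    intro i hi
    by_cases hm : 0 < marginal f S i
    · exact (ENNReal.ofReal_div_of_pos hm).symm
    · have hm0 : marginal f S i = 0 := le_antisymm (not_lt.1 hm) (hmargS i)
      have hc0 : c i = 0 := by
        by_contra hcc
        have hcpos : 0 < c i := (hc i).lt_of_ne (Ne.symm hcc)
        have := hpos i hi hcpos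
        rw [hm0] at this; exact lt_irrefl 0 this
      simp [hw_def, hm0, hc0]
  have hpayS : payment f c S = ENNReal.ofReal W := by
    rw [payment, Finset.sum_congr rfl hterm,
      ← ENNReal.ofReal_sum_of_nonneg (fun i _ => hw0 i)]
  have hmarg_mono : ∀ T ⊆ S, ∀ i ∈ T, marginal f S i ≤ marginal f T i := by
    intro T hTS i hiT
    have h1 : T.erase i ⊆ S.erase i := Finset.erase_subset_erase _ hTS
    have h2 := hsubmod h1 i (Finset.notMem_erase i S)
    rw [Finset.insert_erase (hTS hiT), Finset.insert_erase hiT] at h2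
    simpa [marginal] using h2
  have hpayT : ∀ T ⊆ S, payment f c T ≤ ENNReal.ofReal (∑ i ∈ T, w i) := by
    intro T hTS
    calc payment f c T ≤ ∑ i ∈ T, ENNReal.ofReal (w i) := by
          apply Finset.sum_le_sum
          intro i hi
          calc ENNReal.ofReal (c i) / ENNReal.ofReal (marginal f T i)
              ≤ ENNReal.ofReal (c i) / ENNReal.ofReal (marginal f S i) :=
                ENNReal.div_le_div_left
                  (ENNReal.ofReal_le_ofReal (hmarg_mono T hTS i hi)) _
            _ = ENNReal.ofReal (w i) := hterm i (hTS hi)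
      _ = ENNReal.ofReal (∑ i ∈ T, w i) :=
          (ENNReal.ofReal_sum_of_nonneg (fun i _ => hw0 i)).symm
  by_cases hWpos : W ≤ 0
  · -- W = 0 : take T = S
    have hWeq : W = 0 := le_antisymm hWpos hW0
    refine ⟨S, Finset.Subset.refl S, Or.inl ?_, ?_⟩
    · rw [hpayS, hWeq]; simp
    · have hle1 : 1 / ((M:ℝ) - 1) ≤ 1 := by
        rw [div_le_one hM1pos]; linarith
      nlinarith [hψS.le, hle1]
  push_neg at hWpos
  -- main case
  set v : Finset α → ℝ := fun P => ∑ i ∈ P, w i with hv_def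
  have hv0 : ∀ P, 0 ≤ v P := fun P => Finset.sum_nonneg fun i _ => hw0 i
  have hvsub : ∀ P Q : Finset α, v (P ∪ Q) ≤ v P + v Q := by
    intro P Q
    have h1 := Finset.sum_union_inter (s₁ := P) (s₂ := Q) (f := w)
    have h2 : 0 ≤ ∑ i ∈ P ∩ Q, w i := Finset.sum_nonneg fun i _ => hw0 i
    simp only [hv_def]; linarith
  set C : ℝ := 2 * W / (M:ℝ) with hC_def
  set Ps₀ : Finset (Finset α) := S.image (fun i => ({i} : Finset α)) with hPs0
  have hsup₀ : Ps₀.sup id = S := by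
    rw [hPs0, Finset.sup_image]
    simpa [Function.comp] using Finset.sup_singleton' S
  have hsum₀ : ∑ P ∈ Ps₀, v P = W := by
    rw [hPs0, Finset.sum_image (fun x _ y _ h => Finset.singleton_injective h)]
    simp [hv_def, hW_def]
  have hcond₀ : ∀ P ∈ Ps₀, P.card = 1 ∨ v P ≤ C := by
    intro P hP
    obtain ⟨i, _, rfl⟩ := Finset.mem_image.1 hP
    exact Or.inl (Finset.card_singleton i)
  obtain ⟨Qs, hsupQ, hsumQ, hcondQ, hpairQ⟩ :=
    refine_partition v hv0 hvsub C Ps₀.card Ps₀ le_rfl hcond₀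
  rw [hsup₀] at hsupQ
  rw [hsum₀] at hsumQ
  have hSne : S.Nonempty := by
    rcases S.eq_empty_or_nonempty with rfl | h
    · rw [hW_def, Finset.sum_empty] at hWpos; exact absurd hWpos (lt_irrefl 0)
    · exact h
  have hQsne : Qs.Nonempty := by
    rcases Qs.eq_empty_or_nonempty with rfl | h
    · rw [Finset.sup_empty] at hsupQ
      rw [← hsupQ] at hSne
      exact absurd hSne (by simp [Finset.bot_eq_empty])
    · exact h
  -- cardinality bound
  have hbR : (Qs.card : ℝ) ≤ (M:ℝ) - 1 := by
    by_cases hb : Qs.card ≤ 1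
    · have : (Qs.card : ℝ) ≤ 1 := by exact_mod_cast hb
      linarith
    · push_neg at hb
      set b := Qs.card with hbdef
      have hb2 : 2 ≤ b := hb
      have hb2R : (2:ℝ) ≤ (b:ℝ) := by exact_mod_cast hb2
      have hinner : ∀ P ∈ Qs, ((b:ℝ) - 1) * C < ∑ Q ∈ Qs.erase P, (v P + v Q) := by
        intro P hP
        have hne : (Qs.erase P).Nonempty := by
          rw [← Finset.card_pos, Finset.card_erase_of_mem hP]; omega
        have h := Finset.sum_lt_sum_of_nonempty hne
          (fun Q hQ => hpairQ P hP Q (Finset.mem_of_mem_erase hQ)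
            (Ne.symm (Finset.ne_of_mem_erase hQ)))
        rwa [Finset.sum_const, Finset.card_erase_of_mem hP, nsmul_eq_mul,
          Nat.cast_sub (by omega), Nat.cast_one] at h
      have houter : (b:ℝ) * (((b:ℝ) - 1) * C)
          < ∑ P ∈ Qs, ∑ Q ∈ Qs.erase P, (v P + v Q) := by
        have h := Finset.sum_lt_sum_of_nonempty hQsne hinner
        rwa [Finset.sum_const, nsmul_eq_mul] at h
      have hD : ∑ P ∈ Qs, ∑ Q ∈ Qs.erase P, (v P + v Q)
          = 2 * ((b:ℝ) - 1) * ∑ P ∈ Qs, v P := by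
        have hinnereq : ∀ P ∈ Qs, ∑ Q ∈ Qs.erase P, (v P + v Q)
            = ((b:ℝ) - 1) * v P + (∑ Q ∈ Qs, v Q - v P) := by
          intro P hP
          rw [Finset.sum_add_distrib, Finset.sum_const, Finset.card_erase_of_mem hP,
            nsmul_eq_mul, Nat.cast_sub (by omega), Nat.cast_one,
            Finset.sum_erase_eq_sub hP]
        rw [Finset.sum_congr rfl hinnereq, Finset.sum_add_distrib, Finset.sum_sub_distrib,
          ← Finset.mul_sum, Finset.sum_const, nsmul_eq_mul]
        ring
      rw [hD] at houter
      have h2 : 2*((b:ℝ)-1)*(∑ P ∈ Qs, v P) ≤ 2*((b:ℝ)-1)*W := by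
        have : (0:ℝ) ≤ 2*((b:ℝ)-1) := by linarith
        exact mul_le_mul_of_nonneg_left hsumQ this
      have key : (b:ℝ) * C < 2 * W := by nlinarith
      have k2 : (b:ℝ) * (2*W) / (M:ℝ) < 2*W := by
        rw [hC_def] at key
        calc (b:ℝ) * (2*W) / (M:ℝ) = (b:ℝ) * (2*W/(M:ℝ)) := by ring
          _ < 2*W := key
      have k3 : (b:ℝ) * (2*W) < 2*W*(M:ℝ) := (div_lt_iff₀ hMpos).1 k2
      have hbMR : (b:ℝ) < (M:ℝ) := by nlinarith
      have hbM : b < M := by exact_mod_cast hbMR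
      have : (b:ℝ) + 1 ≤ (M:ℝ) := by exact_mod_cast hbM
      linarith
  -- pigeonhole
  have hsub := subadd_sup_le hψ Qs hQsne
  rw [hsupQ] at hsub
  have hex : ∃ P ∈ Qs, (1/((M:ℝ)-1)) * ψ S ≤ ψ P := by
    by_contra hcon
    push_neg at hcon
    have h1 : ∑ P ∈ Qs, ψ P < ∑ P ∈ Qs, (1/((M:ℝ)-1)) * ψ S :=
      Finset.sum_lt_sum_of_nonempty hQsne hcon
    rw [Finset.sum_const, nsmul_eq_mul] at h1
    have hxpos : 0 < (1/((M:ℝ)-1)) * ψ S := by positivity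
    have h2 : (Qs.card : ℝ) * ((1/((M:ℝ)-1)) * ψ S)
        ≤ ((M:ℝ)-1) * ((1/((M:ℝ)-1)) * ψ S) :=
      mul_le_mul_of_nonneg_right hbR hxpos.le
    have h3 : ((M:ℝ)-1) * ((1/((M:ℝ)-1)) * ψ S) = ψ S := by
      field_simp
    linarith
  obtain ⟨P, hPQs, hψP⟩ := hex
  have hPsub : P ⊆ S := by
    have h := Finset.le_sup (f := (id : Finset α → Finset α)) hPQs
    rw [hsupQ] at h
    exact h
  refine ⟨P, hPsub, ?_, hψP⟩
  rcases hcondQ P hPQs with h1 | h1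
  · exact Or.inr h1
  · left
    calc payment f c P ≤ ENNReal.ofReal (v P) := hpayT P hPsub
      _ ≤ ENNReal.ofReal C := ENNReal.ofReal_le_ofReal h1
      _ ≤ (2 / (M : ℝ≥0∞)) * payment f c S := by
          rw [hpayS, hC_def, ENNReal.ofReal_div_of_pos hMpos,
            ENNReal.ofReal_mul (by norm_num : (0:ℝ) ≤ 2),
            ENNReal.ofReal_natCast, ENNReal.ofReal_ofNat]
          apply le_of_eq
          simp only [div_eq_mul_inv]
          ring
end

section
/- Downsizing Lemma for XOS Reward: Let (A, f, c) be a multi-agent contract instance with XOS f. Then for every integer M ≥ 3 and every subset S ⊆ A such that f_S(i) > 0 for each i ∈ S with c_i > 0, there exists a subset U ⊆ S such that ( p(U) ≤ (4/M)·p(S) or |U| = 1 ) and f(U) ≥ (1/(2M−2))·f(S). -/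
open scoped BigOperators ENNReal
open Finset

/-- Extract a block of `A`-mass in `[θ, 3θ/2)` from any set of mass ≥ θ whose
elements all have mass < θ/2. -/
lemma block_extract {α : Type*} [DecidableEq α] (A : α → ℝ) (θ : ℝ) (hθ : 0 < θ) :
    ∀ (m : ℕ) (V : Finset α), V.card ≤ m → (∀ i ∈ V, A i < θ / 2) →
      θ ≤ ∑ i ∈ V, A i →
      ∃ W ⊆ V, θ ≤ ∑ i ∈ W, A i ∧ ∑ i ∈ W, A i < 3 * θ / 2 := by
  intro m
  induction m with
  | zero =>
    intro V hcard _ hge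
    interval_cases h : V.card
    · rw [Finset.card_eq_zero] at h
      subst h
      simp at hge
      linarith
  | succ m ih =>
    intro V hcard hlt hge
    by_cases hbig : ∑ i ∈ V, A i < 3 * θ / 2
    · exact ⟨V, Finset.Subset.refl V, hge, hbig⟩
    · push_neg at hbig
      have hV : V.Nonempty := by
        rcases V.eq_empty_or_nonempty with rfl | h
        · simp at hge; linarith
        · exact h
      obtain ⟨i, hi⟩ := hV
      have hsum : ∑ x ∈ V.erase i, A x = (∑ x ∈ V, A x) - A i := by
        have := Finset.add_sum_erase V A hi
        linarith
      have hge' : θ ≤ ∑ x ∈ V.erase i, A x := by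
        have := hlt i hi; rw [hsum]; linarith
      have hcard' : (V.erase i).card ≤ m := by
        have := Finset.card_erase_of_mem hi
        omega
      obtain ⟨W, hWsub, h1, h2⟩ := ih (V.erase i)
        hcard' (fun j hj => hlt j (Finset.mem_of_mem_erase hj)) hge'
      exact ⟨W, hWsub.trans (Finset.erase_subset _ _), h1, h2⟩

/-- Iterated block extraction: if the total mass is at least `θ + n·(3θ/2)`, we can
find a block of mass ≥ θ whose `q`-cost is at most a `1/(n+1)` fraction of the total. -/
lemma block_cheap {α : Type*} [DecidableEq α] (A q : α → ℝ) (hq : ∀ i, 0 ≤ q i)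
    (θ : ℝ) (hθ : 0 < θ) :
    ∀ (n : ℕ) (V : Finset α), (∀ i ∈ V, A i < θ / 2) →
      θ + n * (3 * θ / 2) ≤ ∑ i ∈ V, A i →
      ∃ W ⊆ V, θ ≤ ∑ i ∈ W, A i ∧
        ((n : ℝ) + 1) * ∑ i ∈ W, q i ≤ ∑ i ∈ V, q i := by
  intro n
  induction n with
  | zero =>
    intro V hlt hge
    simp only [Nat.cast_zero, zero_mul, add_zero] at hge
    obtain ⟨W, hWsub, h1, _⟩ := block_extract A θ hθ V.card V le_rfl hlt hge
    refine ⟨W, hWsub, h1, ?_⟩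
    have : ∑ i ∈ W, q i ≤ ∑ i ∈ V, q i :=
      Finset.sum_le_sum_of_subset_of_nonneg hWsub (fun i _ _ => hq i)
    push_cast
    linarith
  | succ n ih =>
    intro V hlt hge
    have hge0 : θ ≤ ∑ i ∈ V, A i := by
      have : (0:ℝ) ≤ (n + 1 : ℕ) * (3 * θ / 2) := by positivity
      push_cast at hge ⊢
      nlinarith
    obtain ⟨W₀, hW₀sub, hW₀ge, hW₀lt⟩ := block_extract A θ hθ V.card V le_rfl hlt hge0
    have hsdA : ∑ i ∈ V \ W₀, A i = ∑ i ∈ V, A i - ∑ i ∈ W₀, A i := by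
      have := Finset.sum_sdiff (f := A) hW₀sub
      linarith
    have hsdq : ∑ i ∈ V \ W₀, q i = ∑ i ∈ V, q i - ∑ i ∈ W₀, q i := by
      have := Finset.sum_sdiff (f := q) hW₀sub
      linarith
    have hge' : θ + n * (3 * θ / 2) ≤ ∑ i ∈ V \ W₀, A i := by
      rw [hsdA]
      push_cast at hge
      linarith
    obtain ⟨W₁, hW₁sub, hW₁ge, hW₁q⟩ := ih (V \ W₀)
      (fun j hj => hlt j (Finset.mem_sdiff.mp hj).1) hge'
    rw [hsdq] at hW₁q
    rcases le_total (∑ i ∈ W₀, q i) (∑ i ∈ W₁, q i) with hle | hle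
    · refine ⟨W₀, hW₀sub, hW₀ge, ?_⟩
      have hn : (0:ℝ) ≤ (n : ℝ) + 1 := by positivity
      have := mul_le_mul_of_nonneg_left hle hn
      push_cast
      linarith
    · refine ⟨W₁, hW₁sub.trans (Finset.sdiff_subset), hW₁ge, ?_⟩
      push_cast
      linarith


/-- Argmax trick: within any `W` there is `T ⊆ W` whose marginals are at least
`A i / 2` and whose value is at least `f W - (∑_{W} A)/2`. -/
lemma argmax_trick {α : Type*} [DecidableEq α] (f : Finset α → ℝ) (A : α → ℝ)
    (hA : ∀ i, 0 ≤ A i) (W : Finset α) :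
    ∃ T ⊆ W, (∀ i ∈ T, A i / 2 ≤ f T - f (T.erase i)) ∧
      f W - (∑ i ∈ W, A i) / 2 ≤ f T := by
  obtain ⟨T, hTmem, hmax⟩ := Finset.exists_max_image W.powerset
    (fun T => f T + (∑ i ∈ W \ T, A i) / 2) ⟨∅, Finset.mem_powerset.mpr (Finset.empty_subset _)⟩
  have hTW : T ⊆ W := Finset.mem_powerset.mp hTmem
  refine ⟨T, hTW, ?_, ?_⟩
  · intro i hi
    have hiW : i ∈ W := hTW hi
    have hmem : T.erase i ∈ W.powerset :=
      Finset.mem_powerset.mpr ((Finset.erase_subset _ _).trans hTW)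
    have hkey := hmax _ hmem
    have hset : W \ T.erase i = insert i (W \ T) := by
      ext x
      simp only [Finset.mem_sdiff, Finset.mem_erase, Finset.mem_insert, not_and]
      constructor
      · rintro ⟨hxW, hx⟩
        by_cases hxi : x = i
        · exact Or.inl hxi
        · exact Or.inr ⟨hxW, hx hxi⟩
      · rintro (rfl | ⟨hxW, hxT⟩)
        · exact ⟨hiW, fun h => absurd hi (by simp [h] at *)⟩
        · exact ⟨hxW, fun _ h => hxT h⟩
    have hnotmem : i ∉ W \ T := by simp [Finset.mem_sdiff, hi]
    have hsum : ∑ x ∈ W \ T.erase i, A x = A i + ∑ x ∈ W \ T, A x := by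
      rw [hset, Finset.sum_insert hnotmem]
    rw [hsum] at hkey
    linarith
  · have hkey := hmax W (Finset.mem_powerset.mpr (Finset.Subset.refl W))
    simp only [Finset.sdiff_self, Finset.sum_empty, zero_div, add_zero] at hkey
    have hle : ∑ i ∈ W \ T, A i ≤ ∑ i ∈ W, A i :=
      Finset.sum_le_sum_of_subset_of_nonneg (Finset.sdiff_subset) (fun i _ _ => hA i)
    linarith

/-- **Downsizing Lemma for XOS Reward.** -/
theorem downsizing_xos {α : Type*} [DecidableEq α] [Fintype α]
    (f : Finset α → ℝ) (c : α → ℝ)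
    (hf01 : ∀ S, f S ∈ Set.Icc (0 : ℝ) 1) (hxos : IsXOS f)
    (hc : ∀ i, 0 ≤ c i)
    (M : ℕ) (hM : 3 ≤ M) (S : Finset α)
    (hpos : ∀ i ∈ S, 0 < c i → 0 < marginal f S i) :
    ∃ U ⊆ S,
      (payment f c U ≤ (4 / (M : ℝ≥0∞)) * payment f c S ∨ U.card = 1) ∧
      (1 / (2 * (M : ℝ) - 2)) * f S ≤ f U := by
  classical
  have hM0 : (M : ℝ≥0∞) ≠ 0 := Nat.cast_ne_zero.mpr (by omega)
  have hMtop : (M : ℝ≥0∞) ≠ ⊤ := ENNReal.natCast_ne_top M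
  -- Case M ≤ 4: take U = S.
  by_cases hM4 : M ≤ 4
  · refine ⟨S, Finset.Subset.refl S, Or.inl ?_, ?_⟩
    · have h4 : (M : ℝ≥0∞) ≤ 4 := by
        have : ((M : ℕ) : ℝ≥0∞) ≤ ((4 : ℕ) : ℝ≥0∞) := Nat.cast_le.mpr hM4
        simpa using this
      have h1 : (1 : ℝ≥0∞) ≤ 4 / (M : ℝ≥0∞) := by
        rw [ENNReal.le_div_iff_mul_le (Or.inl hM0) (Or.inl hMtop), one_mul]
        exact h4
      calc payment f c S = 1 * payment f c S := (one_mul _).symm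
        _ ≤ 4 / (M : ℝ≥0∞) * payment f c S := mul_le_mul_left h1 _
    · have hfS := (hf01 S).1
      have hMr : (3 : ℝ) ≤ (M : ℝ) := by exact_mod_cast hM
      have h2 : (1 : ℝ) / (2 * (M : ℝ) - 2) ≤ 1 := by
        rw [div_le_one (by linarith)]
        linarith
      nlinarith
  push_neg at hM4
  have hMr : (5 : ℝ) ≤ (M : ℝ) := by exact_mod_cast (by omega : 5 ≤ M)
  -- XOS witness attaining the sup at S
  obtain ⟨k, a, ha0, hfa⟩ := hxos
  obtain ⟨j₀, -, hj₀⟩ := Finset.exists_mem_eq_sup' Finset.univ_nonempty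
    (fun j => ∑ i ∈ S, a j i)
  set A : α → ℝ := a j₀ with hAdef
  have hA0 : ∀ i, 0 ≤ A i := ha0 j₀
  have hfS_eq : f S = ∑ i ∈ S, A i := by rw [hfa S]; exact hj₀
  have hAle : ∀ T : Finset α, ∑ i ∈ T, A i ≤ f T := by
    intro T
    rw [hfa T]
    exact Finset.le_sup' (fun j => ∑ i ∈ T, a j i) (Finset.mem_univ j₀)
  have hmarg : ∀ i ∈ S, marginal f S i ≤ A i := by
    intro i hi
    have h1 : ∑ x ∈ S.erase i, A x ≤ f (S.erase i) := hAle _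
    have h2 : A i + ∑ x ∈ S.erase i, A x = ∑ x ∈ S, A x := Finset.add_sum_erase S A hi
    show f S - f (S.erase i) ≤ A i
    rw [hfS_eq]
    linarith
  -- Case f S = 0: take U = ∅.
  rcases le_or_gt (f S) 0 with hfS | hfS
  · have hfS0 : f S = 0 := le_antisymm hfS (hf01 S).1
    refine ⟨∅, Finset.empty_subset S, Or.inl ?_, ?_⟩
    · simp [payment]
    · rw [hfS0, mul_zero]
      exact (hf01 ∅).1
  -- Singleton case
  by_cases hsing : ∃ i ∈ S, 1 / (2 * (M : ℝ) - 2) * f S ≤ A i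
  · obtain ⟨i, hiS, hAi⟩ := hsing
    refine ⟨{i}, Finset.singleton_subset_iff.mpr hiS, Or.inr (Finset.card_singleton i), ?_⟩
    have hfi : A i ≤ f {i} := by
      have := hAle {i}
      simpa using this
    linarith
  push_neg at hsing
  -- Main case
  set θ : ℝ := f S / ((M : ℝ) - 1) with hθdef
  have hθ : 0 < θ := div_pos hfS (by linarith)
  have hhalf : θ / 2 = 1 / (2 * (M : ℝ) - 2) * f S := by
    rw [hθdef]
    field_simp
  have hitems : ∀ i ∈ S, A i < θ / 2 := by
    intro i hi
    rw [hhalf]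
    exact hsing i hi
  set n : ℕ := (2 * M - 4) / 3 with hndef
  have h3n : 3 * n + 4 ≤ 2 * M := by omega
  have h3nr : (3 : ℝ) * (n : ℝ) + 4 ≤ 2 * (M : ℝ) := by exact_mod_cast h3n
  have hMn : M ≤ 2 * (n + 1) := by omega
  have hMnr : (M : ℝ) ≤ 2 * ((n : ℝ) + 1) := by exact_mod_cast hMn
  have hfSθ : f S = ((M : ℝ) - 1) * θ := by
    rw [hθdef, mul_comm]
    exact (div_mul_cancel₀ (f S) (by linarith : (M : ℝ) - 1 ≠ 0)).symm
  have hmass : θ + (n : ℝ) * (3 * θ / 2) ≤ ∑ i ∈ S, A i := by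
    rw [← hfS_eq, hfSθ]
    nlinarith [hθ.le]
  obtain ⟨W, hWS, hWmass, hWq⟩ := block_cheap A (fun i => c i / A i)
    (fun i => div_nonneg (hc i) (hA0 i)) θ hθ n S hitems hmass
  obtain ⟨T, hTW, hTmarg, hTval⟩ := argmax_trick f A hA0 W
  have hTS : T ⊆ S := hTW.trans hWS
  have hWA : ∑ i ∈ W, A i ≤ f W := hAle W
  refine ⟨T, hTS, Or.inl ?_, ?_⟩
  · -- payment bound
    have hQW0 : (0 : ℝ) ≤ ∑ i ∈ W, c i / A i :=
      Finset.sum_nonneg fun i _ => div_nonneg (hc i) (hA0 i)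
    have hQS : ENNReal.ofReal (∑ i ∈ S, c i / A i) ≤ payment f c S := by
      rw [ENNReal.ofReal_sum_of_nonneg (fun i _ => div_nonneg (hc i) (hA0 i))]
      apply Finset.sum_le_sum
      intro i hi
      by_cases hci : c i = 0
      · simp [hci]
      · have hcpos : 0 < c i := lt_of_le_of_ne (hc i) (Ne.symm hci)
        have hm : 0 < marginal f S i := hpos i hi hcpos
        rw [← ENNReal.ofReal_div_of_pos hm]
        exact ENNReal.ofReal_le_ofReal
          (div_le_div_of_nonneg_left (hc i) hm (hmarg i hi))
    have hQT : payment f c T ≤ ENNReal.ofReal (∑ i ∈ W, 2 * (c i / A i)) := by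
      have step : payment f c T ≤ ∑ i ∈ T, ENNReal.ofReal (2 * (c i / A i)) := by
        apply Finset.sum_le_sum
        intro i hi
        by_cases hci : c i = 0
        · simp [hci]
        · have hcpos : 0 < c i := lt_of_le_of_ne (hc i) (Ne.symm hci)
          have hAi : 0 < A i := lt_of_lt_of_le (hpos i (hTS hi) hcpos) (hmarg i (hTS hi))
          have hmT : A i / 2 ≤ marginal f T i := hTmarg i hi
          have hmTpos : 0 < marginal f T i := lt_of_lt_of_le (by positivity) hmT
          rw [← ENNReal.ofReal_div_of_pos hmTpos]
          apply ENNReal.ofReal_le_ofReal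
          have h2 : c i / marginal f T i ≤ c i / (A i / 2) :=
            div_le_div_of_nonneg_left (hc i) (by linarith) hmT
          have h3 : c i / (A i / 2) = 2 * (c i / A i) := by
            rw [div_div_eq_mul_div]
            ring
          linarith
      calc payment f c T ≤ ∑ i ∈ T, ENNReal.ofReal (2 * (c i / A i)) := step
        _ = ENNReal.ofReal (∑ i ∈ T, 2 * (c i / A i)) :=
            (ENNReal.ofReal_sum_of_nonneg fun i _ =>
              mul_nonneg (by norm_num) (div_nonneg (hc i) (hA0 i))).symm
        _ ≤ ENNReal.ofReal (∑ i ∈ W, 2 * (c i / A i)) :=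
            ENNReal.ofReal_le_ofReal
              (Finset.sum_le_sum_of_subset_of_nonneg hTW fun i _ _ =>
                mul_nonneg (by norm_num) (div_nonneg (hc i) (hA0 i)))
    have hreal : (∑ i ∈ W, 2 * (c i / A i)) * (M : ℝ) ≤ 4 * ∑ i ∈ S, c i / A i := by
      rw [← Finset.mul_sum]
      nlinarith [hQW0, hWq, hMnr]
    have key : payment f c T * (M : ℝ≥0∞) ≤ 4 * payment f c S := by
      calc payment f c T * (M : ℝ≥0∞)
          ≤ ENNReal.ofReal (∑ i ∈ W, 2 * (c i / A i)) * ENNReal.ofReal (M : ℝ) := by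
            rw [ENNReal.ofReal_natCast]
            exact mul_le_mul' hQT le_rfl
        _ = ENNReal.ofReal ((∑ i ∈ W, 2 * (c i / A i)) * (M : ℝ)) :=
            (ENNReal.ofReal_mul (Finset.sum_nonneg fun i _ =>
              mul_nonneg (by norm_num) (div_nonneg (hc i) (hA0 i)))).symm
        _ ≤ ENNReal.ofReal (4 * ∑ i ∈ S, c i / A i) := ENNReal.ofReal_le_ofReal hreal
        _ = ENNReal.ofReal 4 * ENNReal.ofReal (∑ i ∈ S, c i / A i) :=
            ENNReal.ofReal_mul (by norm_num)
        _ = 4 * ENNReal.ofReal (∑ i ∈ S, c i / A i) := by norm_num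
        _ ≤ 4 * payment f c S := mul_le_mul' le_rfl hQS
    have h1 : payment f c T ≤ 4 * payment f c S / (M : ℝ≥0∞) :=
      (ENNReal.le_div_iff_mul_le (Or.inl hM0) (Or.inl hMtop)).mpr key
    have hfin : 4 * payment f c S / (M : ℝ≥0∞) = 4 / (M : ℝ≥0∞) * payment f c S := by
      rw [div_eq_mul_inv, div_eq_mul_inv, mul_right_comm]
    rwa [hfin] at h1
  · -- value bound
    rw [← hhalf]
    linarith
end

section
/- Budget-Feasible Sets Contain at Most One Heavy Agent: Let (A, f, c) be a multi-agent contract instance with subadditive f, and let B ≤ 1 be a budget. If S ⊆ A is budget-feasible, i.e., p(S) ≤ B, then S contains at most one agent outside the set L of light agents, i.e., |S ∖ L| ≤ 1. -/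
open scoped BigOperators ENNReal
open Finset

/-- **Budget-Feasible Sets Contain at Most One Heavy Agent.** -/
theorem at_most_one_heavy {α : Type*} [DecidableEq α] [Fintype α]
    (f : Finset α → ℝ) (c : α → ℝ)
    (hf01 : ∀ S, f S ∈ Set.Icc (0 : ℝ) 1) (hf0 : f ∅ = 0)
    (hsubadd : IsSubadditive f) (hc : ∀ i, 0 ≤ c i)
    (B : ℝ) (hB : B ≤ 1)
    (S : Finset α) (hfeas : payment f c S ≤ ENNReal.ofReal B) :
    ({i | i ∈ S ∧ ¬ isLight f c i} : Set α).ncard ≤ 1 := by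
  -- Key: for any heavy `i ∈ S`, its payment term in `p(S)` exceeds `1/2`.
  have key : ∀ i ∈ S, ¬ isLight f c i →
      ENNReal.ofReal (1/2) < ENNReal.ofReal (c i) / ENNReal.ofReal (marginal f S i) := by
    intro i hiS hheavy
    have hsingle : payment f c {i} =
        ENNReal.ofReal (c i) / ENNReal.ofReal (f {i}) := by
      simp [payment, marginal, hf0]
    have hlt : ENNReal.ofReal (1/2) < ENNReal.ofReal (c i) / ENNReal.ofReal (f {i}) := by
      have := not_le.mp hheavy
      rwa [hsingle] at this
    refine hlt.trans_le ?_
    have hmarg : marginal f S i ≤ f {i} := by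
      have h1 : f S ≤ f (S.erase i) + f {i} := by
        have := hsubadd (S.erase i) {i}
        have hu : S.erase i ∪ {i} = S := by
          ext x
          simp only [Finset.mem_union, Finset.mem_erase, Finset.mem_singleton]
          constructor
          · rintro (⟨_, hx⟩ | rfl) <;> assumption
          · intro hx
            by_cases hxi : x = i
            · exact Or.inr hxi
            · exact Or.inl ⟨hxi, hx⟩
        rwa [hu] at this
      simp only [marginal]
      linarith
    exact ENNReal.div_le_div_left (ENNReal.ofReal_le_ofReal hmarg) _
  -- show the heavy set is a subsingleton
  have hsub : ({i | i ∈ S ∧ ¬ isLight f c i} : Set α).Subsingleton := by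
    intro i hi j hj
    by_contra hij
    obtain ⟨hiS, hih⟩ := hi
    obtain ⟨hjS, hjh⟩ := hj
    have hpair : ({i, j} : Finset α) ⊆ S := by
      intro x hx
      rcases Finset.mem_insert.mp hx with rfl | hx
      · exact hiS
      · exact (Finset.mem_singleton.mp hx) ▸ hjS
    have hsum : (∑ k ∈ ({i, j} : Finset α),
        ENNReal.ofReal (c k) / ENNReal.ofReal (marginal f S k)) ≤ payment f c S := by
      exact Finset.sum_le_sum_of_subset hpair
    rw [Finset.sum_pair hij] at hsum
    have hgt : ENNReal.ofReal 1 <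
        ENNReal.ofReal (c i) / ENNReal.ofReal (marginal f S i) +
        ENNReal.ofReal (c j) / ENNReal.ofReal (marginal f S j) := by
      have h1 := key i hiS hih
      have h2 := key j hjS hjh
      calc ENNReal.ofReal 1 = ENNReal.ofReal (1/2) + ENNReal.ofReal (1/2) := by
            rw [← ENNReal.ofReal_add (by norm_num) (by norm_num)]; norm_num
        _ < _ := ENNReal.add_lt_add h1 h2
    have hle : payment f c S ≤ ENNReal.ofReal 1 :=
      hfeas.trans (ENNReal.ofReal_le_ofReal hB)
    exact absurd (hgt.trans_le hsum) (not_lt.mpr hle)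
  exact (Set.ncard_le_one (Set.toFinite _)).mpr fun a ha b hb => hsub ha hb
end

section
/- Profit is a BEST objective for subadditive rewards: Let (A, f, c) be a multi-agent contract instance with subadditive f. Then for every S ⊆ A and every i ∈ S: (a) p({i}) ≤ p(S); and (b) if moreover p(S) ≤ 1, then g(S) ≤ f(S∖{i}) + g({i}), where g(T) = (1 − p(T))·f(T). -/
open scoped BigOperators ENNReal
open Finset

/-!
Subadditivity applied to `S.erase i` and `{i}` gives `f S ≤ f (S \ {i}) + f {i}`, so the
marginal of `i` in `S` is at most its stand-alone value `f {i}`. Hence incentivizing `i` alone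
costs at most the share `c i / f_S(i)` it receives within `S`, which gives `p({i}) ≤ p(S)`.
For the profit, split `(1 - p(S)) f(S) ≤ (1 - p(S)) f(S \ {i}) + (1 - p(S)) f {i}`, bound the
first term by `f(S \ {i})` and use `p({i}) ≤ p(S)` in the second.
-/

namespace IsSubadditive

variable {α : Type*} [DecidableEq α] {f : Finset α → ℝ}

theorem le_erase_add_singleton (hf : IsSubadditive f) {S : Finset α} {i : α} (hi : i ∈ S) :
    f S ≤ f (S.erase i) + f {i} := by
  simpa [← Finset.insert_eq, Finset.union_comm, Finset.insert_erase hi] using hf (S.erase i) {i}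

theorem marginal_le_singleton (hf : IsSubadditive f) {S : Finset α} {i : α} (hi : i ∈ S) :
    marginal f S i ≤ f {i} := by
  unfold marginal
  linarith [hf.le_erase_add_singleton hi]

end IsSubadditive

section Payment

variable {α : Type*} [DecidableEq α] {f : Finset α → ℝ} (c : α → ℝ)

theorem payment_singleton (hf0 : f ∅ = 0) (i : α) :
    payment f c {i} = ENNReal.ofReal (c i) / ENNReal.ofReal (f {i}) := by
  simp [payment, marginal, hf0]

theorem div_marginal_le_payment {S : Finset α} {i : α} (hi : i ∈ S) :
    ENNReal.ofReal (c i) / ENNReal.ofReal (marginal f S i) ≤ payment f c S :=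
  Finset.single_le_sum (f := fun j => ENNReal.ofReal (c j) / ENNReal.ofReal (marginal f S j))
    (fun _ _ => zero_le) hi

theorem payment_singleton_le (hf0 : f ∅ = 0) (hf : IsSubadditive f) {S : Finset α} {i : α}
    (hi : i ∈ S) : payment f c {i} ≤ payment f c S :=
  calc payment f c {i} = ENNReal.ofReal (c i) / ENNReal.ofReal (f {i}) := payment_singleton c hf0 i
    _ ≤ ENNReal.ofReal (c i) / ENNReal.ofReal (marginal f S i) :=
      ENNReal.div_le_div_left (ENNReal.ofReal_le_ofReal (hf.marginal_le_singleton hi)) _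
    _ ≤ payment f c S := div_marginal_le_payment c hi

theorem profit_le_erase_add_profit_singleton (hf_nonneg : ∀ T, 0 ≤ f T) (hf0 : f ∅ = 0)
    (hf : IsSubadditive f) {S : Finset α} {i : α} (hi : i ∈ S) (hS : payment f c S ≤ 1) :
    profit f c S ≤ f (S.erase i) + profit f c {i} := by
  set p := (payment f c S).toReal
  set q := (payment f c {i}).toReal
  have hp_le_one : p ≤ 1 := ENNReal.toReal_le_of_le_ofReal zero_le_one (by simpa using hS)
  have hq_le_p : q ≤ p :=
    ENNReal.toReal_mono (ne_top_of_le_ne_top ENNReal.one_ne_top hS)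
      (payment_singleton_le c hf0 hf hi)
  have hp_nonneg : 0 ≤ p := ENNReal.toReal_nonneg
  calc profit f c S = (1 - p) * f S := rfl
    _ ≤ (1 - p) * (f (S.erase i) + f {i}) :=
      mul_le_mul_of_nonneg_left (hf.le_erase_add_singleton hi) (by linarith)
    _ = (1 - p) * f (S.erase i) + (1 - p) * f {i} := mul_add _ _ _
    _ ≤ f (S.erase i) + (1 - q) * f {i} :=
      add_le_add (mul_le_of_le_one_left (hf_nonneg _) (by linarith))
        (mul_le_mul_of_nonneg_right (by linarith) (hf_nonneg _))
    _ = f (S.erase i) + profit f c {i} := rfl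

end Payment

theorem profit_is_BEST_general {α : Type*} [DecidableEq α]
    (f : Finset α → ℝ) (c : α → ℝ)
    (hf01 : ∀ S, f S ∈ Set.Icc (0 : ℝ) 1) (hf0 : f ∅ = 0)
    (hsubadd : IsSubadditive f)
    (S : Finset α) (i : α) (hi : i ∈ S) :
    payment f c {i} ≤ payment f c S ∧
      (payment f c S ≤ 1 → profit f c S ≤ f (S.erase i) + profit f c {i}) :=
  ⟨payment_singleton_le c hf0 hsubadd hi,
    profit_le_erase_add_profit_singleton c (fun T => (hf01 T).1) hf0 hsubadd hi⟩

/-- **Profit is a BEST objective for subadditive rewards.** -/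
theorem profit_is_BEST {α : Type*} [DecidableEq α] [Fintype α]
    (f : Finset α → ℝ) (c : α → ℝ)
    (hf01 : ∀ S, f S ∈ Set.Icc (0 : ℝ) 1) (hf0 : f ∅ = 0)
    (hsubadd : IsSubadditive f) (hc : ∀ i, 0 ≤ c i)
    (S : Finset α) (i : α) (hi : i ∈ S) :
    payment f c {i} ≤ payment f c S ∧
      (payment f c S ≤ 1 → profit f c S ≤ f (S.erase i) + profit f c {i}) :=
  profit_is_BEST_general f c hf01 hf0 hsubadd S i hi
end

section
/- Key Property of BEST Objectives (submodular case): Let (A, f, c) be a multi-agent contract instance with monotone submodular f and A nonempty, let B ∈ (0,1] be a budget, and let φ be a BEST objective. Then Max-φ(B) ≤ Max-Reward-Light(B) + max_{i∈A} φ({i}). -/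
open scoped BigOperators ENNReal
open Finset

/-
A feasible set `S` (payment at most `B ≤ 1`) contains at most one heavy agent, since by
submodularity the payment of `S` dominates the sum of the singleton payments of its members,
and two heavy agents already cost more than `1`. If `S` has no heavy agent, then
`φ(S) ≤ f(S) ≤ Max-Reward-Light(B)`. Otherwise let `i` be the heavy agent: `S ∖ {i}` is light
and, since payments are monotone under submodularity, still feasible, so
`φ(S) ≤ f(S ∖ {i}) + φ({i}) ≤ Max-Reward-Light(B) + max_j φ({j})`.
-/

lemma le_maxVal {α : Type*} {φ : Finset α → ℝ} {P : Finset α → Prop}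
    (hbdd : BddAbove (φ '' {S | P S})) {S : Finset α} (hS : P S) : φ S ≤ maxVal φ P :=
  le_csSup hbdd ⟨S, hS, rfl⟩

namespace IsSubmodular

variable {α : Type*} [DecidableEq α] {f : Finset α → ℝ}

theorem marginal_le_of_subset (hf : IsSubmodular f) {S T : Finset α} (hTS : T ⊆ S) {i : α}
    (hi : i ∈ T) : marginal f S i ≤ marginal f T i := by
  have h := hf (Finset.erase_subset_erase i hTS) i (Finset.notMem_erase i S)
  rwa [Finset.insert_erase hi, Finset.insert_erase (hTS hi)] at h

variable (c : α → ℝ)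

theorem payment_term_le_of_subset (hf : IsSubmodular f) {S T : Finset α} (hTS : T ⊆ S)
    {i : α} (hi : i ∈ T) :
    ENNReal.ofReal (c i) / ENNReal.ofReal (marginal f T i) ≤
      ENNReal.ofReal (c i) / ENNReal.ofReal (marginal f S i) :=
  ENNReal.div_le_div_left (ENNReal.ofReal_le_ofReal (hf.marginal_le_of_subset hTS hi)) _

theorem payment_mono (hf : IsSubmodular f) {S T : Finset α} (hTS : T ⊆ S) :
    payment f c T ≤ payment f c S :=
  calc payment f c T
      ≤ ∑ i ∈ T, ENNReal.ofReal (c i) / ENNReal.ofReal (marginal f S i) :=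
        Finset.sum_le_sum fun _ hi => hf.payment_term_le_of_subset c hTS hi
    _ ≤ payment f c S := Finset.sum_le_sum_of_subset hTS

theorem sum_payment_singleton_le (hf : IsSubmodular f) (S : Finset α) :
    ∑ i ∈ S, payment f c {i} ≤ payment f c S :=
  Finset.sum_le_sum fun i hi => by
    rw [payment, Finset.sum_singleton]
    exact hf.payment_term_le_of_subset c (Finset.singleton_subset_iff.mpr hi)
      (Finset.mem_singleton_self i)

theorem isLight_of_not_isLight (hf : IsSubmodular f) {S : Finset α} (hS : payment f c S ≤ 1)
    {i j : α} (hi : i ∈ S) (hj : j ∈ S) (hij : i ≠ j) (hheavy : ¬ isLight f c i) :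
    isLight f c j := by
  by_contra hj_heavy
  rw [isLight, not_le] at hheavy hj_heavy
  have hpair : payment f c {i} + payment f c {j} ≤ payment f c S :=
    calc payment f c {i} + payment f c {j}
        = ∑ k ∈ {i, j}, payment f c {k} := by rw [Finset.sum_pair hij]
      _ ≤ ∑ k ∈ S, payment f c {k} :=
          Finset.sum_le_sum_of_subset
            (Finset.insert_subset hi (Finset.singleton_subset_iff.mpr hj))
      _ ≤ payment f c S := hf.sum_payment_singleton_le c S
  have hhalf : ENNReal.ofReal (1 / 2) + ENNReal.ofReal (1 / 2) = 1 := by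
    rw [← ENNReal.ofReal_add (by norm_num) (by norm_num)]
    norm_num
  have := (ENNReal.add_lt_add hheavy hj_heavy).trans_le (hpair.trans hS)
  rw [hhalf] at this
  exact lt_irrefl _ this

theorem feasibleLight_erase (hf : IsSubmodular f) {B : ℝ} (hB : B ≤ 1) {S : Finset α}
    (hS : feasible f c B S) {i : α} (hi : i ∈ S) (hheavy : ¬ isLight f c i) :
    feasibleLight f c B (S.erase i) := by
  have hS1 : payment f c S ≤ 1 :=
    hS.trans (ENNReal.ofReal_le_ofReal hB |>.trans_eq ENNReal.ofReal_one)
  refine ⟨fun j hj => ?_, (hf.payment_mono c (Finset.erase_subset i S)).trans hS⟩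
  exact hf.isLight_of_not_isLight c hS1 hi (Finset.mem_of_mem_erase hj)
    (Finset.ne_of_mem_erase hj).symm hheavy

end IsSubmodular

theorem best_key_property_submodular_general {α : Type*} [DecidableEq α]
    (f : Finset α → ℝ) (c : α → ℝ) (φ : Finset α → ℝ)
    (hf01 : ∀ S, f S ∈ Set.Icc (0 : ℝ) 1)
    (hsubmod : IsSubmodular f)
    (hφ : IsBEST f c φ)
    (B : ℝ) (hB1 : B ≤ 1) :
    maxVal φ (feasible f c B) ≤
      maxVal f (feasibleLight f c B) + ⨆ i : α, φ {i} := by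
  obtain ⟨hφ0, hφf, -, hφerase⟩ := hφ
  have hbdd : BddAbove (f '' {S | feasibleLight f c B S}) :=
    ⟨1, by rintro _ ⟨S, -, rfl⟩; exact (hf01 S).2⟩
  have hsingle_bdd : BddAbove (Set.range fun i : α => φ {i}) :=
    ⟨1, by rintro _ ⟨i, rfl⟩; exact (hφf {i}).trans (hf01 {i}).2⟩
  have hempty : feasible f c B ∅ := by simp [feasible, payment]
  refine csSup_le ⟨φ ∅, ∅, hempty, rfl⟩ ?_
  rintro _ ⟨S, hS, rfl⟩
  by_cases hlight : ∀ i ∈ S, isLight f c i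
  · have := le_maxVal hbdd ⟨hlight, hS⟩
    linarith [hφf S, Real.iSup_nonneg fun i : α => hφ0 {i}]
  · push Not at hlight
    obtain ⟨i, hi, hheavy⟩ := hlight
    linarith [hφerase S i hi, le_maxVal hbdd (hsubmod.feasibleLight_erase c hB1 hS hi hheavy),
      le_ciSup hsingle_bdd i]

/-- **Key Property of BEST Objectives (submodular case).** -/
theorem best_key_property_submodular {α : Type*} [DecidableEq α] [Fintype α] [Nonempty α]
    (f : Finset α → ℝ) (c : α → ℝ) (φ : Finset α → ℝ)
    (hf01 : ∀ S, f S ∈ Set.Icc (0 : ℝ) 1) (hf0 : f ∅ = 0)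
    (hmono : IsMonotoneFn f) (hsubmod : IsSubmodular f) (hc : ∀ i, 0 ≤ c i)
    (hφ : IsBEST f c φ)
    (B : ℝ) (hB0 : 0 < B) (hB1 : B ≤ 1) :
    maxVal φ (feasible f c B) ≤
      maxVal f (feasibleLight f c B) + ⨆ i : α, φ {i} :=
  best_key_property_submodular_general f c φ hf01 hsubmod hφ B hB1
end

section
/- Lower Bound on Price of Frugality via an Additive Instance: For every integer n ≥ 1 and all budgets 0 < b < B ≤ 1, let M = min(⌈2B/b⌉ − 1, n). There exists a multi-agent contract instance with n agents and additive f such that p({i}) ≤ b for every agent i ∈ A, and Max-Reward(B) = M · Max-Reward(b) and Max-Welfare(B) = M · Max-Welfare(b). -/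
open scoped BigOperators ENNReal
open Finset

/-!
Take `f(S) = |S| / n` and the same cost `r / n` for every agent. Every marginal is `1 / n`, so
`p(S) = r |S|`: a budget `β` buys exactly the sets of at most `⌊β / r⌋` agents (capped at `n`), and
both reward and welfare are proportional to `|S|`. With `M = min(⌈2B/b⌉ - 1, n)`, the rate
`r = min(b, B/M)` satisfies `b/2 < r ≤ b`, so budget `b` buys exactly one agent, while `M r ≤ B` and
either `M = n` or `(M + 1) r > B`, so budget `B` buys exactly `M` agents.
-/

section CardinalityInstance

variable {α : Type*} [DecidableEq α]

theorem marginal_card_mul {a : ℝ} {S : Finset α} {i : α} (hi : i ∈ S) :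
    marginal (fun S : Finset α => (#S : ℝ) * a) S i = a := by
  rw [marginal, card_erase_of_mem hi, Nat.cast_sub (card_pos.mpr ⟨i, hi⟩)]
  ring

theorem payment_card_mul {a : ℝ} (ha : 0 < a) (r : ℝ) (S : Finset α) :
    payment (fun S : Finset α => (#S : ℝ) * a) (fun _ => r * a) S = #S * ENNReal.ofReal r := by
  rw [payment, ← nsmul_eq_mul, ← sum_const]
  refine sum_congr rfl fun i hi => ?_
  rw [marginal_card_mul hi, ← ENNReal.ofReal_div_of_pos ha, mul_div_cancel_right₀ r ha.ne']

theorem feasible_card_mul {a : ℝ} (ha : 0 < a) (r : ℝ) {β : ℝ} (hβ : 0 ≤ β) :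
    feasible (fun S : Finset α => (#S : ℝ) * a) (fun _ => r * a) β =
      fun S => (#S : ℝ) * r ≤ β := by
  funext S
  rw [feasible, payment_card_mul ha, ← ENNReal.ofReal_natCast,
    ← ENNReal.ofReal_mul (Nat.cast_nonneg _), ENNReal.ofReal_le_ofReal_iff hβ]

end CardinalityInstance

theorem maxVal_card_mul {α : Type*} [Fintype α] {P : ℕ → Prop} {K : ℕ}
    (hK : IsGreatest {k | k ≤ Fintype.card α ∧ P k} K) {w : ℝ} (hw : 0 ≤ w) :
    maxVal (fun S : Finset α => (#S : ℝ) * w) (fun S => P #S) = K * w := by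
  refine IsGreatest.csSup_eq ⟨?_, ?_⟩
  · obtain ⟨S, -, hS⟩ := exists_subset_card_eq (s := univ) (by simpa using hK.1.1)
    exact ⟨S, by simpa [hS] using hK.1.2, by simp [hS]⟩
  · rintro _ ⟨S, hS, rfl⟩
    exact mul_le_mul_of_nonneg_right (by exact_mod_cast hK.2 ⟨card_le_univ S, hS⟩) hw

theorem isGreatest_affordable_count {n K : ℕ} {r β : ℝ} (hr : 0 < r) (hKn : K ≤ n) (hK : K * r ≤ β)
    (hmax : K = n ∨ β < (K + 1) * r) :
    IsGreatest {k : ℕ | k ≤ n ∧ k * r ≤ β} K := by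
  refine ⟨⟨hKn, hK⟩, fun k ⟨hkn, hk⟩ => ?_⟩
  rcases hmax with rfl | hlt
  · exact hkn
  · by_contra! hKk
    have : ((K : ℝ) + 1) * r ≤ k * r := by gcongr; exact_mod_cast hKk
    linarith

theorem exists_payment_rate {n M : ℕ} {b B : ℝ} (hn : 1 ≤ n) (hb : 0 < b) (hbB : b < B)
    (hM : M = min (⌈2 * B / b⌉₊ - 1) n) :
    ∃ r : ℝ, 0 < r ∧ r ≤ b ∧ b < 2 * r ∧ M * r ≤ B ∧ (M = n ∨ B < (M + 1) * r) := by
  have hB0 : 0 < B := hb.trans hbB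
  have hceil : 2 * B / b ≤ ⌈2 * B / b⌉₊ := Nat.le_ceil _
  have hceil_lt : (⌈2 * B / b⌉₊ : ℝ) < 2 * B / b + 1 := Nat.ceil_lt_add_one (by positivity)
  have htwo : 2 < ⌈2 * B / b⌉₊ := by
    rw [Nat.lt_ceil, lt_div_iff₀ hb]; push_cast; linarith
  have hM0 : (0 : ℝ) < M := by rw [hM]; exact_mod_cast lt_min (by omega) hn
  have hMb : M * b < 2 * B := by
    have : (M : ℝ) ≤ ⌈2 * B / b⌉₊ - 1 := by
      rw [hM, ← Nat.cast_pred (by omega)]; exact_mod_cast min_le_left _ _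
    rw [← lt_div_iff₀ hb]; linarith
  refine ⟨min b (B / M), lt_min hb (div_pos hB0 hM0), min_le_left _ _, ?_, ?_, ?_⟩
  · rw [mul_min_of_nonneg _ _ zero_le_two]
    refine lt_min (by linarith) ?_
    rw [mul_div_assoc', lt_div_iff₀ hM0]; linarith
  · calc (M : ℝ) * min b (B / M) ≤ M * (B / M) := by gcongr; exact min_le_right _ _
      _ = B := mul_div_cancel₀ B hM0.ne'
  · rcases min_choice (⌈2 * B / b⌉₊ - 1) n with h | h <;> rw [h] at hM
    · refine Or.inr ?_
      have hM1 : (M : ℝ) + 1 = ⌈2 * B / b⌉₊ := by rw [hM]; norm_cast; omega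
      rw [mul_min_of_nonneg _ _ (by positivity), hM1]
      refine lt_min ?_ ?_
      · rw [div_le_iff₀ hb] at hceil; linarith
      · rw [← hM1, mul_div_assoc', lt_div_iff₀ hM0]; linarith
    · exact Or.inl hM

theorem intCast_min_ceil_sub_one {x : ℝ} (hx : 0 < x) (n : ℕ) :
    ((min (⌈x⌉ - 1) (n : ℤ) : ℤ) : ℝ) = (min (⌈x⌉₊ - 1) n : ℕ) := by
  have : 1 ≤ ⌈x⌉₊ := Nat.one_le_iff_ne_zero.mpr (Nat.ceil_pos.mpr hx).ne'
  rw [← Int.natCast_ceil_eq_ceil hx.le,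
    show min ((⌈x⌉₊ : ℤ) - 1) (n : ℤ) = ((min (⌈x⌉₊ - 1) n : ℕ) : ℤ) by omega, Int.cast_natCast]

/-- **Lower Bound on Price of Frugality via an Additive Instance.** -/
theorem pof_lower_additive (n : ℕ) (hn : 1 ≤ n) (b B : ℝ)
    (hb : 0 < b) (hbB : b < B) (hB : B ≤ 1) :
    ∃ (f : Finset (Fin n) → ℝ) (c : Fin n → ℝ),
      (∀ S, f S ∈ Set.Icc (0 : ℝ) 1) ∧ f ∅ = 0 ∧ IsAdditive f ∧ (∀ i, 0 ≤ c i) ∧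
      (∀ i, payment f c {i} ≤ ENNReal.ofReal b) ∧
      maxVal f (feasible f c B)
        = ((min (⌈2 * B / b⌉ - 1) (n : ℤ) : ℤ) : ℝ) * maxVal f (feasible f c b) ∧
      maxVal (fun S => f S - ∑ i ∈ S, c i) (feasible f c B)
        = ((min (⌈2 * B / b⌉ - 1) (n : ℤ) : ℤ) : ℝ) *
            maxVal (fun S => f S - ∑ i ∈ S, c i) (feasible f c b) := by
  have hB0 : 0 < B := hb.trans hbB
  set M := min (⌈2 * B / b⌉₊ - 1) n with hM
  have hMz := intCast_min_ceil_sub_one (by positivity : 0 < 2 * B / b) n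
  rw [← hM] at hMz
  obtain ⟨r, hr, hrb, hbr, hMB, hMmax⟩ := exists_payment_rate hn hb hbB hM
  have ha : (0 : ℝ) < 1 / n := by positivity
  have hbuy_B := isGreatest_affordable_count (K := M) hr (Nat.min_le_right _ _) hMB hMmax
  have hbuy_b := isGreatest_affordable_count (n := n) hr hn (by simpa using hrb)
    (Or.inr (by norm_num; linarith))
  have hw : 0 ≤ (1 - r) * (1 / n) := mul_nonneg (by linarith) ha.le
  have hwelfare : (fun S : Finset (Fin n) => (#S : ℝ) * (1 / n) - ∑ _ ∈ S, r * (1 / n)) =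
      fun S => (#S : ℝ) * ((1 - r) * (1 / n)) := by
    funext S; rw [sum_const, nsmul_eq_mul]; ring
  rw [← Fintype.card_fin n] at hbuy_B hbuy_b
  refine ⟨fun S => #S * (1 / n), fun _ => r * (1 / n), fun S => ⟨by positivity, ?_⟩, by simp,
    fun S => by simp [sum_const], fun _ => by positivity, fun i => ?_, ?_, ?_⟩
  · dsimp only
    rw [← div_eq_mul_one_div, div_le_one (by positivity)]
    exact_mod_cast card_le_univ S |>.trans_eq (Fintype.card_fin n)
  · rw [payment_card_mul ha, card_singleton, Nat.cast_one, one_mul]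
    exact ENNReal.ofReal_le_ofReal hrb
  · rw [feasible_card_mul ha r hB0.le, feasible_card_mul ha r hb.le, hMz,
      maxVal_card_mul hbuy_B ha.le, maxVal_card_mul hbuy_b ha.le]
    ring
  · rw [feasible_card_mul ha r hB0.le, feasible_card_mul ha r hb.le, hMz, hwelfare,
      maxVal_card_mul hbuy_B hw, maxVal_card_mul hbuy_b hw]
    ring
end
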